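/- Let M be an n×n matrix with nonnegative entries whose spectral radius λ satisfies λ ≥ 1, and let J denote the all-ones row vector. Then sup over nonzero nonnegative integer vectors x of limsup_{k→∞} (1/k)·log(J · M^k · x) equals log λ, and the supremum is attained by some such vector x. -/

import Mathlib

/-!
Let `S k` be the sum of all entries of `M ^ k`, i.e. `J · M^k · 1`. For the `ℓ∞` operator norm and
nonnegative `M`, `‖M ^ k‖ ≤ S k ≤ n ‖M ^ k‖`, so Gelfand's formula gives
`(1/k) log S k → log λ`; hence `x = 1` attains the value `log λ`. For any other nonzero
`x : ℕⁿ`, `J · M^k · x ≤ (∑ j, x j) · S k` bounds the limsup by `log λ`. The limsup is a genuine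
one: the positive entries of `M ^ k x` are at least `δ ^ k`, `δ` the least positive entry of `M`,
so the sequence is bounded below.
-/

open Matrix Filter

/-- The spectral radius of a real square matrix: the supremum of the absolute
values of its complex eigenvalues. -/
noncomputable def specRad {m : Type*} [Fintype m] [DecidableEq m] (M : Matrix m m ℝ) : ℝ :=
  sSup ((fun z : ℂ => ‖z‖) '' spectrum ℂ (M.map Complex.ofReal))

open Topology Real
open scoped NNReal ENNReal

section NonnegMatrix

theorem Finset.sum_eq_zero_or_le_sum {ι α : Type*} [AddCommMonoid α] [PartialOrder α]
    [IsOrderedAddMonoid α] {s : Finset ι} {f : ι → α} {a : α} (ha : 0 ≤ a)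
    (h : ∀ i ∈ s, f i = 0 ∨ a ≤ f i) : ∑ i ∈ s, f i = 0 ∨ a ≤ ∑ i ∈ s, f i := by
  by_cases hzero : ∃ i ∈ s, f i ≠ 0
  swap
  · exact Or.inl (Finset.sum_eq_zero fun i hi => not_not.1 fun hne => hzero ⟨i, hi, hne⟩)
  obtain ⟨i, hi, hne⟩ := hzero
  have hnonneg : ∀ j ∈ s, 0 ≤ f j := fun j hj => (h j hj).elim (·.ge) ha.trans
  exact Or.inr (((h i hi).resolve_left hne).trans (Finset.single_le_sum hnonneg hi))

theorem exists_pos_forall_eq_zero_or_le {ι : Type*} [Finite ι] {f : ι → ℝ}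
    (hf : ∀ i, 0 ≤ f i) : ∃ δ > 0, ∀ i, f i = 0 ∨ δ ≤ f i := by
  cases isEmpty_or_nonempty ι
  · exact ⟨1, one_pos, isEmptyElim⟩
  let g i := if f i = 0 then 1 else f i
  have hg : ∀ i, 0 < g i := fun i => by
    by_cases h : f i = 0 <;> simp only [g, h, if_true, if_false, one_pos]
    exact (hf i).lt_of_ne' h
  obtain ⟨i₀, hi₀⟩ := Finite.exists_min g
  refine ⟨g i₀, hg i₀, fun i => or_iff_not_imp_left.2 fun h => ?_⟩
  simpa [g, h] using hi₀ i

variable {l m : Type*} [Fintype m]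

theorem mulVec_eq_zero_or_le {M : Matrix l m ℝ} {v : m → ℝ} {δ c : ℝ} (hδ : 0 ≤ δ) (hc : 0 ≤ c)
    (hM : ∀ i j, M i j = 0 ∨ δ ≤ M i j) (hv : ∀ j, v j = 0 ∨ c ≤ v j) (i : l) :
    (M *ᵥ v) i = 0 ∨ δ * c ≤ (M *ᵥ v) i := by
  refine Finset.sum_eq_zero_or_le_sum (mul_nonneg hδ hc) fun j _ => ?_
  rcases hM i j with h | hMij
  · simp [h]
  rcases hv j with h | hvj
  · simp [h]
  exact Or.inr (mul_le_mul hMij hvj hc (hδ.trans hMij))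

theorem pow_mulVec_eq_zero_or_le [DecidableEq m] {M : Matrix m m ℝ} {v : m → ℝ} {δ c : ℝ}
    (hδ : 0 ≤ δ) (hc : 0 ≤ c) (hM : ∀ i j, M i j = 0 ∨ δ ≤ M i j) (hv : ∀ j, v j = 0 ∨ c ≤ v j)
    (k : ℕ) (i : m) : (M ^ k *ᵥ v) i = 0 ∨ δ ^ k * c ≤ (M ^ k *ᵥ v) i := by
  induction k generalizing i with
  | zero => simpa using hv i
  | succ k ih =>
    rw [pow_succ', ← mulVec_mulVec, pow_succ' δ, mul_assoc]
    exact mulVec_eq_zero_or_le hδ (by positivity) hM ih i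

theorem sum_mulVec_le_sum_mul_sum_sum [Fintype l] {B : Matrix l m ℝ} (hB : ∀ i j, 0 ≤ B i j)
    {v : m → ℝ} (hv : ∀ j, 0 ≤ v j) : ∑ i, (B *ᵥ v) i ≤ (∑ j, v j) * ∑ i, ∑ j, B i j := by
  simp only [Finset.mul_sum, mulVec, dotProduct]
  refine Finset.sum_le_sum fun i _ => Finset.sum_le_sum fun j _ => ?_
  rw [mul_comm (∑ j, v j)]
  exact mul_le_mul_of_nonneg_left (Finset.single_le_sum (fun j _ => hv j) (Finset.mem_univ j))
    (hB i j)

end NonnegMatrix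

section LinftyOp

attribute [local instance] Matrix.linftyOpSeminormedAddCommGroup

variable {l m α : Type*} [Fintype l] [Fintype m] [SeminormedAddCommGroup α]

theorem Matrix.linfty_opNorm_le_sum_sum_norm (A : Matrix l m α) :
    ‖A‖ ≤ ∑ i, ∑ j, ‖A i j‖ := by
  have : ‖A‖₊ ≤ ∑ i, ∑ j, ‖A i j‖₊ := by
    rw [linfty_opNNNorm_def]
    exact Finset.sup_le fun i hi =>
      Finset.single_le_sum (f := fun i => ∑ j, ‖A i j‖₊) (fun _ _ => zero_le) hi
  simpa using NNReal.coe_le_coe.2 this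

theorem Matrix.sum_sum_norm_le_card_mul_linfty_opNorm (A : Matrix l m α) :
    ∑ i, ∑ j, ‖A i j‖ ≤ Fintype.card l * ‖A‖ := by
  have : ∑ i, ∑ j, ‖A i j‖₊ ≤ Fintype.card l • ‖A‖₊ := by
    rw [linfty_opNNNorm_def]
    exact Finset.sum_le_card_nsmul _ _ _ fun i hi =>
      Finset.le_sup (f := fun i => ∑ j, ‖A i j‖₊) hi
  simpa using NNReal.coe_le_coe.2 this

end LinftyOp

section SpectralRadius

attribute [local instance] Matrix.linftyOpNormedAddCommGroup Matrix.linftyOpNormedRing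
  Matrix.linftyOpNormedAlgebra

variable {m : Type*} [Fintype m] [DecidableEq m]

theorem nonempty_of_specRad_pos {M : Matrix m m ℝ} (h : 0 < specRad M) : Nonempty m := by
  by_contra hm
  rw [not_nonempty_iff] at hm
  simp [specRad, spectrum.of_subsingleton] at h

theorem exists_mem_spectrum_norm_eq_specRad [Nonempty m] (M : Matrix m m ℝ) :
    ∃ z ∈ spectrum ℂ (M.map Complex.ofReal),
      (‖z‖₊ : ℝ≥0∞) = spectralRadius ℂ (M.map Complex.ofReal) ∧ ‖z‖ = specRad M := by
  obtain ⟨z, hz, hmax⟩ := spectrum.exists_nnnorm_eq_spectralRadius_of_nonempty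
    (spectrum.nonempty (M.map Complex.ofReal))
  refine ⟨z, hz, hmax, (IsGreatest.csSup_eq (s := (fun z : ℂ => ‖z‖) '' _)
    ⟨⟨z, hz, rfl⟩, ?_⟩).symm⟩
  rintro _ ⟨w, hw, rfl⟩
  have : (‖w‖₊ : ℝ≥0∞) ≤ ‖z‖₊ := hmax ▸ le_iSup₂ (f := fun w _ => (‖w‖₊ : ℝ≥0∞)) w hw
  exact_mod_cast this

theorem pow_specRad_le_norm_pow [Nonempty m] (M : Matrix m m ℝ) (k : ℕ) :
    specRad M ^ k ≤ ‖M.map Complex.ofReal ^ k‖ := by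
  obtain ⟨z, hz, -, hnorm⟩ := exists_mem_spectrum_norm_eq_specRad M
  rw [← hnorm, ← norm_pow]
  exact spectrum.norm_le_norm_of_mem (spectrum.pow_mem_pow _ k hz)

theorem tendsto_norm_pow_rpow_specRad [Nonempty m] (M : Matrix m m ℝ) :
    Tendsto (fun k : ℕ => ‖M.map Complex.ofReal ^ k‖ ^ (1 / (k : ℝ))) atTop (𝓝 (specRad M)) := by
  obtain ⟨z, -, hrad, hnorm⟩ := exists_mem_spectrum_norm_eq_specRad M
  have := (ENNReal.tendsto_toReal (hrad ▸ ENNReal.coe_ne_top)).comp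
    (spectrum.pow_norm_pow_one_div_tendsto_nhds_spectralRadius (M.map Complex.ofReal))
  rw [← hrad, ENNReal.coe_toReal, coe_nnnorm, hnorm] at this
  exact this.congr fun k => ENNReal.toReal_ofReal (by positivity)

theorem sum_sum_norm_map_ofReal_pow {M : Matrix m m ℝ} (hM : ∀ i j, 0 ≤ M i j) (k : ℕ) :
    ∑ i, ∑ j, ‖(M.map Complex.ofReal ^ k) i j‖ = ∑ i, ∑ j, (M ^ k) i j := by
  have hmap : M.map Complex.ofReal ^ k = (M ^ k).map Complex.ofReal :=
    (Matrix.map_pow M Complex.ofRealHom k).symm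
  rw [hmap]
  simp [Complex.norm_real, abs_of_nonneg, pow_apply_nonneg hM k]

end SpectralRadius

theorem tendsto_one_div_mul_log_of_le_of_le {a s : ℕ → ℝ} {c₁ c₂ L : ℝ} (hc₁ : 0 < c₁)
    (hc₂ : 0 < c₂) (hL : 0 < L) (ha : ∀ k, 0 < a k)
    (hlim : Tendsto (fun k : ℕ => a k ^ (1 / (k : ℝ))) atTop (𝓝 L))
    (hlo : ∀ k, c₁ * a k ≤ s k) (hhi : ∀ k, s k ≤ c₂ * a k) :
    Tendsto (fun k : ℕ => 1 / (k : ℝ) * log (s k)) atTop (𝓝 (log L)) := by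
  have hlog : Tendsto (fun k : ℕ => 1 / (k : ℝ) * log (a k)) atTop (𝓝 (log L)) :=
    ((continuousAt_log hL.ne').tendsto.comp hlim).congr fun k => log_rpow (ha k) _
  have hscale : ∀ c : ℝ, 0 < c →
      Tendsto (fun k : ℕ => 1 / (k : ℝ) * log (c * a k)) atTop (𝓝 (log L)) := fun c hc => by
    have := (tendsto_one_div_atTop_nhds_zero_nat.mul_const (log c)).add hlog
    rw [zero_mul, zero_add] at this
    exact this.congr fun k => by rw [log_mul hc.ne' (ha k).ne', mul_add]
  have hs : ∀ k, 0 < s k := fun k => (mul_pos hc₁ (ha k)).trans_le (hlo k)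
  refine tendsto_of_tendsto_of_tendsto_of_le_of_le (hscale c₁ hc₁) (hscale c₂ hc₂)
    (fun k => ?_) (fun k => ?_)
  · have := ha k
    gcongr
    exact hlo k
  · have := hs k
    gcongr
    exact hhi k

section GrowthRate

attribute [local instance] Matrix.linftyOpNormedAddCommGroup Matrix.linftyOpNormedRing
  Matrix.linftyOpNormedAlgebra

variable {m : Type*} [Fintype m] [DecidableEq m] {M : Matrix m m ℝ}

theorem tendsto_log_mul_sum_sum_pow (hM : ∀ i j, 0 ≤ M i j) (hρ : 0 < specRad M) {c : ℝ}
    (hc : 0 < c) :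
    Tendsto (fun k : ℕ => 1 / (k : ℝ) * log (c * ∑ i, ∑ j, (M ^ k) i j)) atTop
      (𝓝 (log (specRad M))) := by
  have := nonempty_of_specRad_pos hρ
  refine tendsto_one_div_mul_log_of_le_of_le hc
    (mul_pos hc (Nat.cast_pos.2 (Fintype.card_pos (α := m)))) hρ
    (fun k => (pow_pos hρ k).trans_le (pow_specRad_le_norm_pow M k))
    (tendsto_norm_pow_rpow_specRad M) (fun k => ?_) (fun k => ?_)
  · rw [← sum_sum_norm_map_ofReal_pow hM]
    gcongr
    exact linfty_opNorm_le_sum_sum_norm _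
  · rw [← sum_sum_norm_map_ofReal_pow hM, mul_assoc]
    gcongr
    exact sum_sum_norm_le_card_mul_linfty_opNorm _

theorem isBoundedUnder_ge_log_sum_pow_mulVec (hM : ∀ i j, 0 ≤ M i j) (x : m → ℕ) :
    IsBoundedUnder (· ≥ ·) atTop
      fun k : ℕ => 1 / (k : ℝ) * log (∑ i, (M ^ k *ᵥ fun j => (x j : ℝ)) i) := by
  obtain ⟨δ, hδ, hMδ⟩ :=
    exists_pos_forall_eq_zero_or_le (f := fun p : m × m => M p.1 p.2) fun p => hM p.1 p.2
  have hx : ∀ j, (x j : ℝ) = 0 ∨ 1 ≤ (x j : ℝ) := fun j => by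
    rcases Nat.eq_zero_or_pos (x j) with h | h
    · simp [h]
    · exact Or.inr (mod_cast h)
  refine isBoundedUnder_of ⟨min 0 (log δ), fun k => ?_⟩
  have hsum : ∑ i, (M ^ k *ᵥ fun j => (x j : ℝ)) i = 0 ∨
      δ ^ k * 1 ≤ ∑ i, (M ^ k *ᵥ fun j => (x j : ℝ)) i :=
    Finset.sum_eq_zero_or_le_sum (by positivity) fun i _ =>
      pow_mulVec_eq_zero_or_le hδ.le zero_le_one (fun i j => hMδ (i, j)) hx k i
  rcases hsum with h | h
  · simp [h]
  rw [mul_one] at h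
  rcases Nat.eq_zero_or_pos k with rfl | hk
  · simp
  calc min 0 (log δ) ≤ log δ := min_le_right _ _
    _ = 1 / (k : ℝ) * log (δ ^ k) := by rw [log_pow]; field_simp
    _ ≤ _ := by
      have := pow_pos hδ k
      gcongr

theorem limsup_log_sum_pow_mulVec_le (hM : ∀ i j, 0 ≤ M i j) (hρ : 1 ≤ specRad M) {x : m → ℕ}
    (hx : x ≠ 0) :
    limsup (fun k : ℕ => 1 / (k : ℝ) * log (∑ i, (M ^ k *ᵥ fun j => (x j : ℝ)) i)) atTop
      ≤ log (specRad M) := by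
  have := nonempty_of_specRad_pos (one_pos.trans_le hρ)
  set C := ∑ j, (x j : ℝ)
  have hC : 1 ≤ C := by
    obtain ⟨j, hj⟩ := Function.ne_iff.1 hx
    exact (Nat.one_le_cast.2 (Nat.one_le_iff_ne_zero.2 hj)).trans
      (Finset.single_le_sum (f := fun j => (x j : ℝ)) (fun _ _ => Nat.cast_nonneg _)
        (Finset.mem_univ j))
  have hS : ∀ k, 1 ≤ ∑ i, ∑ j, (M ^ k) i j := fun k =>
    (one_le_pow₀ hρ).trans <| (pow_specRad_le_norm_pow M k).trans <|
      (linfty_opNorm_le_sum_sum_norm _).trans_eq (sum_sum_norm_map_ofReal_pow hM k)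
  have hg := tendsto_log_mul_sum_sum_pow hM (one_pos.trans_le hρ) (one_pos.trans_le hC)
  refine (limsup_le_limsup (Eventually.of_forall fun k => ?_)
    (isBoundedUnder_ge_log_sum_pow_mulVec hM x).isCoboundedUnder_le
    hg.isBoundedUnder_le).trans_eq hg.limsup_eq
  have hnonneg : 0 ≤ ∑ i, (M ^ k *ᵥ fun j => (x j : ℝ)) i :=
    Finset.sum_nonneg fun i _ => Finset.sum_nonneg fun j _ =>
      mul_nonneg (pow_apply_nonneg hM k i j) (Nat.cast_nonneg _)
  rcases hnonneg.eq_or_lt with h | h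
  · -- `log 0 = 0`, so this case needs `1 ≤ C * S k`
    rw [← h, log_zero, mul_zero]
    exact mul_nonneg (by positivity) (log_nonneg (one_le_mul_of_one_le_of_one_le hC (hS k)))
  · gcongr
    exact sum_mulVec_le_sum_mul_sum_sum (pow_apply_nonneg hM k) fun j => Nat.cast_nonneg _

end GrowthRate

/-- For a nonnegative matrix `M` with spectral radius `λ ≥ 1`, the supremum over nonzero
nonnegative integer vectors `x` of `limsup (1/k) log (J · M^k · x)` (where `J·M^k·x` is the
sum of the entries of `M^k x`) equals `log λ`, and is attained by some such `x`. -/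
theorem sup_growth_rate_eq_log_spectral_radius
    {n : ℕ} (M : Matrix (Fin n) (Fin n) ℝ)
    (hpos : ∀ i j, 0 ≤ M i j) (hlam : 1 ≤ specRad M) :
    IsGreatest
      {r : ℝ | ∃ x : Fin n → ℕ, x ≠ 0 ∧
        r = limsup (fun k : ℕ =>
          (1 / (k : ℝ)) * Real.log (∑ i, ((M ^ k).mulVec (fun j => (x j : ℝ))) i)) atTop}
      (Real.log (specRad M)) := by
  have hρ : 0 < specRad M := one_pos.trans_le hlam
  have := nonempty_of_specRad_pos hρ
  refine ⟨⟨fun _ => 1, Function.ne_iff.2 ⟨Classical.arbitrary _, one_ne_zero⟩, ?_⟩, ?_⟩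
  · have hones := tendsto_log_mul_sum_sum_pow hpos hρ one_pos
    simp only [one_mul] at hones
    rw [← hones.limsup_eq]
    simp [mulVec, dotProduct]
  · rintro r ⟨x, hx, rfl⟩
    exact limsup_log_sum_pow_mulVec_le hpos hlam hx
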